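/- Let p ≥ 3 be a prime and suppose Σ_{i=0}^∞ a_i p^i = Σ_{i=0}^∞ b_i p^i as p-adic integers, where a_i ∈ {0, ±1, ..., ±(p-1)/2} and b_i ∈ {0, 1, ..., p-1}. Then for every t ≥ 0: a_t ≡ b_t + Σ_{λ=0}^{t-1} (Σ_{c=(p+1)/2}^{p-1} [1 - (b_λ - c)^{p-1}]) · Π_{λ < i < t} [1 - (b_i - (p-1)/2)^{p-1}] (mod p). -/

import Mathlib

/-!
Comparing truncations of the two expansions, `p^t` divides `∑_{i<t} (b_i - a_i) p^i`; the quotient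
`c_t` is the carry into position `t`, and `p c_{t+1} = c_t + b_t - a_t`. Since `|a_t| ≤ (p-1)/2`,
induction gives `c_t ∈ {0, 1}`, with `c_{t+1}` equal to `1`, `c_t` or `0` according as `b_t` is
greater than, equal to or less than `(p-1)/2`. Unwinding this recursion, `c_t = 1` exactly when some
`b_l` with `l < t` exceeds `(p-1)/2` and all digits strictly between `l` and `t` equal `(p-1)/2`.
Reducing mod `p` gives `a_t ≡ b_t + c_t`, and by Fermat `1 - x^(p-1)` is the indicator of `x = 0`
in `ZMod p`, which turns the right-hand side of the formula into `b_t + c_t`.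
-/

open Finset

namespace PadicInt

variable {p : ℕ} [Fact p.Prime]

theorem summable_mul_p_pow (x : ℕ → ℤ_[p]) : Summable fun i => x i * (p : ℤ_[p]) ^ i := by
  have hp : (1 : ℝ) < p := mod_cast (Fact.out : p.Prime).one_lt
  refine Summable.of_norm_bounded
    (summable_geometric_of_lt_one (by positivity) (inv_lt_one_of_one_lt₀ hp)) fun i => ?_
  calc ‖x i * (p : ℤ_[p]) ^ i‖ ≤ ‖(p : ℤ_[p]) ^ i‖ := by
        rw [norm_mul]; exact mul_le_of_le_one_left (norm_nonneg _) (norm_le_one _)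
    _ = (p : ℝ)⁻¹ ^ i := by rw [norm_p_pow, zpow_neg, zpow_natCast, inv_pow]

theorem norm_tsum_mul_p_pow_sub_sum_range_le (x : ℕ → ℤ_[p]) (n : ℕ) :
    ‖(∑' i, x i * (p : ℤ_[p]) ^ i) - ∑ i ∈ range n, x i * (p : ℤ_[p]) ^ i‖
      ≤ (p : ℝ) ^ (-n : ℤ) := by
  have htail : (∑' i, x i * (p : ℤ_[p]) ^ i) - ∑ i ∈ range n, x i * (p : ℤ_[p]) ^ i
      = (∑' i, x (i + n) * (p : ℤ_[p]) ^ i) * (p : ℤ_[p]) ^ n := by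
    rw [← (summable_mul_p_pow x).sum_add_tsum_nat_add n, add_sub_cancel_left,
      ← (summable_mul_p_pow fun i => x (i + n)).tsum_mul_right]
    simp only [pow_add, mul_assoc]
  rw [htail, norm_mul, norm_p_pow]
  exact mul_le_of_le_one_left (by positivity) (norm_le_one _)

theorem pow_dvd_sum_range_sub_of_tsum_eq (a b : ℕ → ℤ)
    (h : ∑' i, (a i : ℤ_[p]) * (p : ℤ_[p]) ^ i = ∑' i, (b i : ℤ_[p]) * (p : ℤ_[p]) ^ i)
    (n : ℕ) :
    (p : ℤ) ^ n ∣ ∑ i ∈ range n, (b i - a i) * (p : ℤ) ^ i := by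
  rw [← norm_int_le_pow_iff_dvd]
  have hsub : ((∑ i ∈ range n, (b i - a i) * (p : ℤ) ^ i : ℤ) : ℤ_[p])
      = ((∑' i, (a i : ℤ_[p]) * (p : ℤ_[p]) ^ i)
          - ∑ i ∈ range n, (a i : ℤ_[p]) * (p : ℤ_[p]) ^ i)
        - ((∑' i, (b i : ℤ_[p]) * (p : ℤ_[p]) ^ i)
          - ∑ i ∈ range n, (b i : ℤ_[p]) * (p : ℤ_[p]) ^ i) := by
    push_cast
    rw [h]
    simp only [sub_mul, sum_sub_distrib]
    abel
  rw [hsub, sub_eq_add_neg]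
  refine (nonarchimedean _ _).trans (max_le ?_ ?_)
  · exact norm_tsum_mul_p_pow_sub_sum_range_le _ n
  · exact (norm_neg _).trans_le (norm_tsum_mul_p_pow_sub_sum_range_le _ n)

end PadicInt

namespace ZMod

variable {p : ℕ} [Fact p.Prime]

theorem one_sub_pow_card_sub_one (x : ZMod p) :
    1 - x ^ (p - 1) = if x = 0 then 1 else 0 := by
  rw [pow_card_sub_one]
  split_ifs <;> simp_all

theorem one_sub_pow_natCast_sub_natCast {x y : ℕ} (hx : x < p) (hy : y < p) :
    1 - ((x : ZMod p) - y) ^ (p - 1) = if x = y then 1 else 0 := by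
  rw [one_sub_pow_card_sub_one]
  exact if_congr (by rw [sub_eq_zero, natCast_eq_natCast_iff', Nat.mod_eq_of_lt hx,
    Nat.mod_eq_of_lt hy]) rfl rfl

theorem sum_Icc_one_sub_pow_natCast_sub_natCast {x : ℕ} (k : ℕ) (hx : x < p) :
    ∑ c ∈ Icc k (p - 1), (1 - ((x : ZMod p) - c) ^ (p - 1)) = if k ≤ x then 1 else 0 := by
  rw [sum_congr rfl fun c hc => one_sub_pow_natCast_sub_natCast hx
    (by rw [mem_Icc] at hc; omega), sum_ite_eq]
  exact if_congr (by rw [mem_Icc]; omega) rfl rfl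

end ZMod

def balancedCarry (m : ℕ) (b : ℕ → ℕ) : ℕ → ℕ
  | 0 => 0
  | n + 1 => if m < b n then 1 else if b n = m then balancedCarry m b n else 0

theorem balancedCarry_succ_of_mul_eq {m d : ℕ} {a c c' : ℤ} (ha : |a| ≤ m) (hd : d ≤ 2 * m)
    (hc : 0 ≤ c ∧ c ≤ 1) (h : c' * (2 * m + 1) = c + (d - a)) :
    c' = if m < d then 1 else if d = m then c else 0 := by
  have ha' := abs_le.mp ha
  have hlow : -1 * (2 * (m : ℤ) + 1) < c' * (2 * m + 1) := by rw [h]; omega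
  have hupp : c' * (2 * m + 1) < 2 * (2 * (m : ℤ) + 1) := by rw [h]; omega
  have h01 : c' = 0 ∨ c' = 1 := by
    have := lt_of_mul_lt_mul_right hlow (by positivity)
    have := lt_of_mul_lt_mul_right hupp (by positivity)
    omega
  rcases h01 with rfl | rfl <;> simp only [zero_mul, one_mul] at h <;> split_ifs <;> omega

section BalancedCarry

variable {m : ℕ} {b : ℕ → ℕ}

theorem balancedCarry_le_one (n : ℕ) : balancedCarry m b n ≤ 1 := by
  cases n with
  | zero => simp [balancedCarry]
  | succ n =>
    simp only [balancedCarry]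
    split_ifs
    exacts [le_rfl, balancedCarry_le_one n, zero_le_one]

theorem balancedCarry_eq_sum {R : Type*} [CommSemiring R] (t : ℕ) :
    (balancedCarry m b t : R) = ∑ l ∈ range t,
      (if m < b l then 1 else 0) * ∏ i ∈ Ioo l t, (if b i = m then (1 : R) else 0) := by
  induction t with
  | zero => simp [balancedCarry]
  | succ t ih =>
    have hextend : ∀ l ∈ range t,
        (if m < b l then 1 else 0) * ∏ i ∈ Ioo l (t + 1), (if b i = m then (1 : R) else 0)
          = (if b t = m then 1 else 0) * ((if m < b l then 1 else 0)
            * ∏ i ∈ Ioo l t, (if b i = m then (1 : R) else 0)) := by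
      intro l hl
      rw [Ioo_add_one_right_eq_Ioc, ← mul_prod_Ioo_eq_prod_Ioc (mem_range.mp hl), mul_left_comm]
    rw [sum_range_succ, Ioo_add_one_right_eq_Ioc, Ioc_self, prod_empty, mul_one,
      sum_congr rfl hextend, ← mul_sum, ← ih, balancedCarry]
    split_ifs <;> simp_all

theorem eq_balancedCarry_of_mul_eq {a c : ℕ → ℤ} (ha : ∀ n, |a n| ≤ m)
    (hb : ∀ n, b n ≤ 2 * m)
    (h0 : c 0 = 0) (hrec : ∀ n, c (n + 1) * (2 * m + 1) = c n + (b n - a n)) (n : ℕ) :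
    c n = balancedCarry m b n := by
  induction n with
  | zero => simp [h0, balancedCarry]
  | succ n ih =>
    have hcn : 0 ≤ c n ∧ c n ≤ 1 := by
      rw [ih]; exact ⟨Int.natCast_nonneg _, mod_cast balancedCarry_le_one n⟩
    rw [balancedCarry_succ_of_mul_eq (ha n) (hb n) hcn (hrec n), ih, balancedCarry]
    split_ifs <;> simp

end BalancedCarry

theorem mul_succ_eq_of_sum_range_eq_pow_mul {p : ℤ} (hp : p ≠ 0) {d c : ℕ → ℤ}
    (hc : ∀ n, ∑ i ∈ range n, d i * p ^ i = p ^ n * c n) (n : ℕ) :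
    c (n + 1) * p = c n + d n := by
  have h := hc (n + 1)
  rw [sum_range_succ, hc n, pow_succ] at h
  exact mul_left_cancel₀ (pow_ne_zero n hp) (by linear_combination -h)

/-- Transformation from least residues to numerically least residues: formula for `a_t`. -/
theorem lr_to_nlr (p : ℕ) [Fact (Nat.Prime p)] (hp3 : 3 ≤ p)
    (a : ℕ → ℤ) (b : ℕ → ℕ)
    (ha : ∀ i, |a i| ≤ (p - 1) / 2) (hb : ∀ i, b i < p)
    (heq : (∑' i : ℕ, (a i : ℤ_[p]) * (p : ℤ_[p]) ^ i)
        = ∑' i : ℕ, (b i : ℤ_[p]) * (p : ℤ_[p]) ^ i) :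
    ∀ t, (a t : ZMod p) = (b t : ZMod p) +
      ∑ l ∈ Finset.range t,
        (∑ c ∈ Finset.Icc ((p + 1) / 2) (p - 1), (1 - ((b l : ZMod p) - c) ^ (p - 1))) *
          ∏ i ∈ Finset.Ioo l t,
            (1 - ((b i : ZMod p) - ((p - 1) / 2 : ℕ)) ^ (p - 1)) := by
  intro t
  set m := (p - 1) / 2
  have hp : p = 2 * m + 1 := by
    have := (Fact.out : p.Prime).eq_one_or_self_of_dvd 2
    omega
  choose c hc using PadicInt.pow_dvd_sum_range_sub_of_tsum_eq a (fun i => b i) (by simpa using heq)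
  have hrec := mul_succ_eq_of_sum_range_eq_pow_mul (by positivity) hc
  have hcarry : ∀ n, c n = balancedCarry m b n :=
    eq_balancedCarry_of_mul_eq (fun n => (ha n).trans_eq (by omega))
      (fun n => by have := hb n; omega)
      (by simpa using (hc 0).symm) (fun n => by rw [← hrec n]; push_cast [hp]; ring)
  have hdigit : (a t : ZMod p) = b t + balancedCarry m b t := by
    have h := congrArg (Int.cast : ℤ → ZMod p) (hrec t)
    rw [hcarry, hcarry] at h
    push_cast [ZMod.natCast_self] at h
    linear_combination h
  rw [hdigit, balancedCarry_eq_sum, show (p + 1) / 2 = m + 1 by omega]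
  congr 1
  refine sum_congr rfl fun l _ => ?_
  rw [ZMod.sum_Icc_one_sub_pow_natCast_sub_natCast _ (hb l),
    prod_congr rfl fun i _ => ZMod.one_sub_pow_natCast_sub_natCast (hb i) (by omega)]
  rfl
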